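/- arXiv:2412.18949 — 2 statements merged into one kernel-verified Lean document; each statement's English description precedes it below -/
import Mathlib

section
/- For a finite metric space X with m ≥ 2 points, and 2 ≤ n ≤ m, one has αₙ(X) = σ_{n−1}(X): the maximal possible minimal inter-part distance over partitions into n parts equals the (n−1)-st largest edge length of a minimal spanning tree on X. -/
/-- The distance between two subsets of a metric space. -/
noncomputable def setDist {X : Type} [MetricSpace X] (A B : Set X) : ℝ :=
  sInf {d | ∃ a ∈ A, ∃ b ∈ B, dist a b = d}

/-- The value `α(D)` of the partition of `X` into the fibers of `f : X → Fin n`: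
the infimum of the distances between distinct parts. -/
noncomputable def partAlpha {X : Type} [MetricSpace X] {n : ℕ} (f : X → Fin n) : ℝ :=
  sInf {d | ∃ i j : Fin n, i ≠ j ∧ d = setDist (f ⁻¹' {i}) (f ⁻¹' {j})}

/-- `αₙ(X)`: the supremum of `α(D)` over all partitions `D` of `X` into `n`
nonempty parts (encoded as surjections `X → Fin n`). -/
noncomputable def alphaN (X : Type) [MetricSpace X] (n : ℕ) : ℝ :=
  sSup {a | ∃ f : X → Fin n, Function.Surjective f ∧ a = partAlpha f}


/-- The multiset of edge lengths of a graph `G` on a finite metric space `V`. -/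
noncomputable def edgeLengths {V : Type} [MetricSpace V] [Fintype V] (G : SimpleGraph V) :
    Multiset ℝ :=
  (G.edgeSet.toFinite.toFinset).val.map
    (Sym2.lift ⟨fun x y => dist x y, fun _ _ => dist_comm _ _⟩)

/-- The length of a graph `G` on a finite metric space: the sum of the lengths of its edges. -/
noncomputable def graphLength {V : Type} [MetricSpace V] [Fintype V] (G : SimpleGraph V) : ℝ :=
  (edgeLengths G).sum

/-- `G` is a minimal spanning tree on the finite metric space `V`: a tree with vertex set `V`
whose length is minimal among all such trees. -/
def IsMST {V : Type} [MetricSpace V] [Fintype V] (G : SimpleGraph V) : Prop :=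
  G.IsTree ∧ ∀ H : SimpleGraph V, H.IsTree → graphLength G ≤ graphLength H


/-!
Upper bound: a spanning tree connects the `n` parts of a partition `D`, so at least `n - 1` of
its edges join different parts, and each of them is at least `α(D)` long; hence
`α(D) ≤ σ_{n-1}`. Lower bound: deleting `n - 1` tree edges of length `≥ σ_{n-1}` from a minimal
spanning tree leaves at least `n` components, and by the exchange argument for minimal spanning
trees, points in different components are at least `σ_{n-1}` apart; merging the components into
`n` groups gives a partition with `α(D) ≥ σ_{n-1}`. Both counts rest on the fact that deleting an
edge raises the number of connected components by at most one.
-/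

open SimpleGraph Function Finset

theorem le_getElem_iff_lt_countP_of_pairwise_ge {α : Type*} [Preorder α] [DecidableLE α]
    {L : List α} (hL : L.Pairwise (· ≥ ·)) {k : ℕ} (hk : k < L.length) (a : α) :
    a ≤ L[k] ↔ k < L.countP (fun x => decide (a ≤ x)) := by
  induction L generalizing k with
  | nil => simp at hk
  | cons b L ih =>
    obtain ⟨hb, hL⟩ := List.pairwise_cons.1 hL
    by_cases hab : a ≤ b
    · cases k with
      | zero => simp [hab]
      | succ k =>
        simp only [List.getElem_cons_succ, List.countP_cons, hab, decide_true, if_true]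
        rw [ih hL (by simpa using hk)]
        omega
    · have hcount : (b :: L).countP (fun x => decide (a ≤ x)) = 0 :=
        List.countP_eq_zero.2 fun x hx hax => hab <| by
          rcases List.mem_cons.1 hx with rfl | hx
          exacts [of_decide_eq_true hax, (of_decide_eq_true hax).trans (hb x hx)]
      have hbk : (b :: L)[k] ≤ b := by
        cases k with
        | zero => exact le_rfl
        | succ k => exact hb _ (List.getElem_mem _)
      simpa [hcount] using fun h => hab (h.trans hbk)

section SetDist

variable {X : Type} [MetricSpace X]

theorem setDist_nonneg (A B : Set X) : 0 ≤ setDist A B :=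
  Real.sInf_nonneg <| by rintro _ ⟨a, -, b, -, rfl⟩; exact dist_nonneg

theorem setDist_le_dist {A B : Set X} {a b : X} (ha : a ∈ A) (hb : b ∈ B) :
    setDist A B ≤ dist a b :=
  csInf_le ⟨0, by rintro _ ⟨x, -, y, -, rfl⟩; exact dist_nonneg⟩ ⟨a, ha, b, hb, rfl⟩

theorem le_setDist {A B : Set X} {c : ℝ} (hA : A.Nonempty) (hB : B.Nonempty)
    (h : ∀ a ∈ A, ∀ b ∈ B, c ≤ dist a b) : c ≤ setDist A B := by
  obtain ⟨a, ha⟩ := hA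
  obtain ⟨b, hb⟩ := hB
  exact le_csInf ⟨_, a, ha, b, hb, rfl⟩ <| by rintro _ ⟨x, hx, y, hy, rfl⟩; exact h x hx y hy

variable {n : ℕ} {f : X → Fin n}

theorem partAlpha_le_dist {x y : X} (hxy : f x ≠ f y) : partAlpha f ≤ dist x y := calc
  partAlpha f ≤ setDist (f ⁻¹' {f x}) (f ⁻¹' {f y}) :=
    csInf_le ⟨0, by rintro _ ⟨i, j, -, rfl⟩; exact setDist_nonneg _ _⟩ ⟨_, _, hxy, rfl⟩
  _ ≤ dist x y := setDist_le_dist rfl rfl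

theorem le_partAlpha {c : ℝ} (hn : 1 < n) (hf : Surjective f)
    (h : ∀ x y, f x ≠ f y → c ≤ dist x y) : c ≤ partAlpha f := by
  refine le_csInf ⟨_, ⟨0, by omega⟩, ⟨1, hn⟩, by simp [Fin.ext_iff], rfl⟩ ?_
  rintro _ ⟨i, j, hij, rfl⟩
  obtain ⟨x, rfl⟩ := hf i
  obtain ⟨y, rfl⟩ := hf j
  refine le_setDist ⟨x, rfl⟩ ⟨y, rfl⟩ fun a ha b hb => h a b ?_
  simp_all

end SetDist

namespace SimpleGraph

variable {V : Type*} {G : SimpleGraph V}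

theorem Reachable.deleteEdges_singleton_or {x y : V} (h : G.Reachable x y) (u v : V) :
    (G.deleteEdges {s(u, v)}).Reachable x y ∨
      (G.deleteEdges {s(u, v)}).Reachable x u ∧ (G.deleteEdges {s(u, v)}).Reachable y v ∨
      (G.deleteEdges {s(u, v)}).Reachable x v ∧ (G.deleteEdges {s(u, v)}).Reachable y u := by
  obtain ⟨w⟩ := h
  induction w with
  | nil => exact .inl .rfl
  | @cons x z y hxz _ ih =>
    by_cases he : s(x, z) = s(u, v)
    · rcases Sym2.eq_iff.1 he with ⟨rfl, rfl⟩ | ⟨rfl, rfl⟩ <;>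
        rcases ih with h | ⟨h₁, h₂⟩ | ⟨h₁, h₂⟩ <;> simp_all [Reachable.symm]
    · have hxz' : (G.deleteEdges {s(u, v)}).Reachable x z :=
        Adj.reachable ((deleteEdges_adj ..).2 ⟨hxz, he⟩)
      rcases ih with h | ⟨h₁, h₂⟩ | ⟨h₁, h₂⟩
      exacts [.inl (hxz'.trans h), .inr (.inl ⟨hxz'.trans h₁, h₂⟩),
        .inr (.inr ⟨hxz'.trans h₁, h₂⟩)]

theorem card_connectedComponent_deleteEdges_singleton_le [Finite V] (e : Sym2 V) :
    Nat.card (G.deleteEdges {e}).ConnectedComponent ≤ Nat.card G.ConnectedComponent + 1 := by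
  classical
  induction e with | h u v =>
  set H := G.deleteEdges {s(u, v)}
  let φ : H.ConnectedComponent → Option G.ConnectedComponent := fun c =>
    if c = H.connectedComponentMk v then none else some (c.map (Hom.ofLE (deleteEdges_le _)))
  have hφ : Injective φ := by
    intro c₁ c₂ h
    induction c₁ using ConnectedComponent.ind with | h x =>
    induction c₂ using ConnectedComponent.ind with | h y =>
    by_cases hx : H.connectedComponentMk x = H.connectedComponentMk v <;>
      by_cases hy : H.connectedComponentMk y = H.connectedComponentMk v <;>
      simp only [φ, hx, hy, if_true, if_false, reduceCtorEq, Option.some.injEq] at h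
    · exact hx.trans hy.symm
    · replace h : G.connectedComponentMk x = G.connectedComponentMk y := h
      rw [ConnectedComponent.eq] at h hx hy ⊢
      rcases h.deleteEdges_singleton_or u v with h | ⟨-, h⟩ | ⟨h, -⟩
      exacts [h, absurd h hy, absurd h hx]
  simpa using Nat.card_le_card_of_injective φ hφ

theorem card_connectedComponent_deleteEdges_le [Finite V] (S : Finset (Sym2 V)) :
    Nat.card (G.deleteEdges S).ConnectedComponent ≤ Nat.card G.ConnectedComponent + #S := by
  classical
  induction S using Finset.induction_on with
  | empty => simp
  | insert e S he ih =>
    rw [Finset.coe_insert, Set.insert_eq, Set.union_comm, ← deleteEdges_deleteEdges,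
      Finset.card_insert_of_notMem he]
    have := (G.deleteEdges S).card_connectedComponent_deleteEdges_singleton_le e
    omega

theorem card_le_card_connectedComponent_add_card_edgeSet [Finite V] :
    Nat.card V ≤ Nat.card G.ConnectedComponent + Nat.card G.edgeSet := by
  have hbot : G.deleteEdges G.edgeSet.toFinite.toFinset = ⊥ := by simp
  have hmk : Injective (⊥ : SimpleGraph V).connectedComponentMk := fun x y h =>
    reachable_bot.1 (ConnectedComponent.eq.1 h)
  have := G.card_connectedComponent_deleteEdges_le G.edgeSet.toFinite.toFinset
  rw [hbot] at this
  rw [Nat.card_eq_card_finite_toFinset G.edgeSet.toFinite]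
  exact (Nat.card_le_card_of_injective _ hmk).trans this

theorem Connected.card_le_card_filter_not_isDiag_add_one [Finite V] (hG : G.Connected)
    {β : Type*} [DecidableEq β] {f : V → β} (hf : Surjective f) :
    Nat.card β ≤ #{e ∈ G.edgeSet.toFinite.toFinset | ¬(e.map f).IsDiag} + 1 := by
  set S := {e ∈ G.edgeSet.toFinite.toFinset | ¬(e.map f).IsDiag}
  set H := G.deleteEdges S
  have hconst : ∀ x y, H.Reachable x y → f x = f y := by
    rintro x y ⟨w⟩
    induction w with
    | nil => rfl
    | cons hadj _ ih =>
      obtain ⟨hadj, hS⟩ := deleteEdges_adj.1 hadj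
      refine Eq.trans (not_not.1 fun hne => hS ?_) ih
      simpa [S] using ⟨hadj, hne⟩
  let g : H.ConnectedComponent → β :=
    ConnectedComponent.lift f fun x y p _ => hconst x y p.reachable
  have hg : Surjective g := fun b =>
    let ⟨x, hx⟩ := hf b; ⟨H.connectedComponentMk x, hx⟩
  have hG1 : Nat.card G.ConnectedComponent ≤ 1 :=
    Finite.card_le_one_iff_subsingleton.2 hG.preconnected.subsingleton_connectedComponent
  calc Nat.card β ≤ Nat.card H.ConnectedComponent := Nat.card_le_card_of_surjective g hg
    _ ≤ Nat.card G.ConnectedComponent + #S := card_connectedComponent_deleteEdges_le S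
    _ ≤ #S + 1 := by omega

theorem connected_deleteEdges_sup_edge (hG : G.Connected) {u v x y : V}
    (hxy : ¬(G.deleteEdges {s(u, v)}).Reachable x y) :
    (G.deleteEdges {s(u, v)} ⊔ edge x y).Connected := by
  set H := G.deleteEdges {s(u, v)}
  have hH : H ≤ H ⊔ edge x y := le_sup_left
  have hne : x ≠ y := by rintro rfl; exact hxy .rfl
  have hadj : (H ⊔ edge x y).Adj x y := Or.inr <| (edge_adj ..).2 ⟨.inl ⟨rfl, rfl⟩, hne⟩
  have hz : ∀ z, (H ⊔ edge x y).Reachable z u ∨ (H ⊔ edge x y).Reachable z v := fun z => by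
    rcases (hG.preconnected z u).deleteEdges_singleton_or u v with h | ⟨h, -⟩ | ⟨h, -⟩
    exacts [.inl (h.mono hH), .inl (h.mono hH), .inr (h.mono hH)]
  have huv : (H ⊔ edge x y).Reachable u v := by
    rcases (hG.preconnected x y).deleteEdges_singleton_or u v with h | ⟨hx, hy⟩ | ⟨hx, hy⟩
    · exact absurd h hxy
    · exact (hx.mono hH).symm.trans (hadj.reachable.trans (hy.mono hH))
    · exact (hy.mono hH).symm.trans (hadj.reachable.symm.trans (hx.mono hH))
  refine (connected_iff_exists_forall_reachable _).2 ⟨u, fun z => ?_⟩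
  rcases hz z with h | h
  exacts [h.symm, huv.trans h.symm]

theorem toFinset_edgeSet_deleteEdges_sup_edge [Finite V] [DecidableEq V] {u v x y : V}
    (hxy : x ≠ y) :
    (G.deleteEdges {s(u, v)} ⊔ edge x y).edgeSet.toFinite.toFinset =
      insert s(x, y) (G.edgeSet.toFinite.toFinset.erase s(u, v)) := by
  ext e
  simp only [Set.Finite.mem_toFinset, edgeSet_sup, edgeSet_deleteEdges, edgeSet_edge,
    Finset.mem_insert, Finset.mem_erase, Set.mem_union, Set.mem_sdiff, Set.mem_singleton_iff,
    Sym2.mem_diagSet]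
  constructor
  · rintro (⟨he, hne⟩ | ⟨rfl, -⟩)
    exacts [.inr ⟨hne, he⟩, .inl rfl]
  · rintro (rfl | ⟨hne, he⟩)
    exacts [.inr ⟨rfl, hxy⟩, .inl ⟨he, hne⟩]

theorem IsAcyclic.not_reachable_deleteEdges_of_mem_edges (hG : G.IsAcyclic) {x y : V}
    (p : G.Path x y) {e : Sym2 V} (he : e ∈ p.1.edges) : ¬(G.deleteEdges {e}).Reachable x y := by
  classical
  obtain ⟨u, v⟩ := e
  intro h
  obtain ⟨q, hq⟩ := reachable_deleteEdges_iff_exists_walk.1 h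
  have hqp : q.toPath = p := (hG.subsingleton_path x y).elim _ _
  exact hq (Walk.edges_toPath_subset_edges q (hqp ▸ he))

end SimpleGraph

section MinimalSpanningTree

variable {V : Type} [MetricSpace V]

noncomputable def edgeLength : Sym2 V → ℝ :=
  Sym2.lift ⟨fun x y => dist x y, fun _ _ => dist_comm _ _⟩

@[simp] theorem edgeLength_mk (x y : V) : edgeLength s(x, y) = dist x y := rfl

variable [Fintype V]

theorem graphLength_eq_sum (G : SimpleGraph V) :
    graphLength G = ∑ e ∈ G.edgeSet.toFinite.toFinset, edgeLength e := rfl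

theorem countP_edgeLengths (G : SimpleGraph V) (p : ℝ → Prop) [DecidablePred p] :
    (edgeLengths G).countP p = #{e ∈ G.edgeSet.toFinite.toFinset | p (edgeLength e)} :=
  Multiset.countP_map _ _ _

theorem SimpleGraph.Connected.sub_one_le_card_filter_partAlpha_le {G : SimpleGraph V}
    (hG : G.Connected) {n : ℕ} {f : V → Fin n} (hf : Surjective f) :
    n - 1 ≤ #{e ∈ G.edgeSet.toFinite.toFinset | partAlpha f ≤ edgeLength e} := by
  have hcross := hG.card_le_card_filter_not_isDiag_add_one hf
  rw [Nat.card_fin] at hcross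
  refine Nat.sub_le_of_le_add (hcross.trans (Nat.add_le_add_right (card_le_card fun e => ?_) 1))
  obtain ⟨x, y⟩ := e
  simp only [mem_filter, Sym2.map_mk, Sym2.mk_isDiag_iff, edgeLength_mk]
  exact And.imp_right partAlpha_le_dist

variable {T : SimpleGraph V}

theorem IsMST.dist_le_of_not_reachable_deleteEdges (hT : IsMST T) {u v x y : V}
    (huv : T.Adj u v) (hxy : ¬(T.deleteEdges {s(u, v)}).Reachable x y) :
    dist u v ≤ dist x y := by
  classical
  -- otherwise exchanging the edge `s(u, v)` for `s(x, y)` would give a shorter spanning tree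
  by_contra! hlt
  have hne : x ≠ y := by rintro rfl; exact hxy .rfl
  have hxyT : s(x, y) ∉ T.edgeSet.toFinite.toFinset.erase s(u, v) := by
    simp only [Finset.mem_erase, Set.Finite.mem_toFinset, mem_edgeSet]
    exact fun ⟨h, hadj⟩ => hxy (deleteEdges_adj.2 ⟨hadj, h⟩).reachable
  have huvT : s(u, v) ∈ T.edgeSet.toFinite.toFinset := by simpa using huv
  have hE := T.toFinset_edgeSet_deleteEdges_sup_edge (u := u) (v := v) hne
  have htree : (T.deleteEdges {s(u, v)} ⊔ edge x y).IsTree := by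
    rw [isTree_iff_connected_and_card, Nat.card_eq_card_finite_toFinset (Set.toFinite _), hE,
      card_insert_of_notMem hxyT, card_erase_add_one huvT,
      ← Nat.card_eq_card_finite_toFinset (Set.toFinite _)]
    exact ⟨connected_deleteEdges_sup_edge hT.1.connected hxy,
      (isTree_iff_connected_and_card.1 hT.1).2⟩
  have hlen := hT.2 _ htree
  rw [graphLength_eq_sum, graphLength_eq_sum, hE, sum_insert hxyT,
    ← sum_erase_add _ _ huvT] at hlen
  simp only [edgeLength_mk] at hlen
  linarith

theorem IsMST.le_dist_of_not_reachable_deleteEdges (hT : IsMST T) {S : Set (Sym2 V)} {c : ℝ}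
    (hS : ∀ e ∈ S, c ≤ edgeLength e) {x y : V} (hxy : ¬(T.deleteEdges S).Reachable x y) :
    c ≤ dist x y := by
  obtain ⟨p, hp⟩ := hT.1.connected.exists_isPath x y
  obtain ⟨⟨u, v⟩, heS, hep⟩ := p.exists_mem_edges_of_not_reachable_deleteEdges hxy
  calc c ≤ dist u v := hS _ heS
    _ ≤ dist x y := hT.dist_le_of_not_reachable_deleteEdges (p.adj_of_mem_edges hep)
      (hT.1.isAcyclic.not_reachable_deleteEdges_of_mem_edges ⟨p, hp⟩ hep)

theorem IsMST.exists_surjective_le_partAlpha (hT : IsMST T) {n : ℕ} (hn : 2 ≤ n) {c : ℝ}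
    (hc : n - 1 ≤ #{e ∈ T.edgeSet.toFinite.toFinset | c ≤ edgeLength e}) :
    ∃ f : V → Fin n, Surjective f ∧ c ≤ partAlpha f := by
  obtain ⟨S, hS, hScard⟩ := exists_subset_card_eq hc
  set H := T.deleteEdges S
  have hHedges : Nat.card H.edgeSet + (n - 1) + 1 = Fintype.card V := by
    have hST : (S : Set (Sym2 V)) ⊆ T.edgeSet := fun e he => by
      simpa using (mem_filter.1 (hS he)).1
    rw [← Nat.card_eq_fintype_card, ← (isTree_iff_connected_and_card.1 hT.1).2, ← hScard,
      Nat.card_coe_set_eq, Nat.card_coe_set_eq, edgeSet_deleteEdges, Set.ncard_sdiff hST,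
      Set.ncard_coe_finset, Nat.sub_add_cancel]
    simpa using Set.ncard_le_ncard hST
  have hnH : n ≤ Nat.card H.ConnectedComponent := by
    have := H.card_le_card_connectedComponent_add_card_edgeSet
    rw [Nat.card_eq_fintype_card] at this
    omega
  obtain ⟨g, hg⟩ : ∃ g : H.ConnectedComponent → Fin n, Surjective g :=
    exists_surjective_iff.2 ⟨⟨fun _ => ⟨0, by omega⟩⟩,
      ⟨(Fin.castLEEmb hnH).trans (Finite.equivFin _).symm.toEmbedding⟩⟩
  have hmk : Surjective H.connectedComponentMk := fun c => c.exists_rep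
  refine ⟨g ∘ H.connectedComponentMk, hg.comp hmk,
    le_partAlpha hn (hg.comp hmk) fun x y hxy => ?_⟩
  exact hT.le_dist_of_not_reachable_deleteEdges (fun e he => (mem_filter.1 (hS he)).2)
    fun h => hxy (congrArg g (ConnectedComponent.eq.2 h))

end MinimalSpanningTree

theorem alphaN_eq_mst_spectrum_general (X : Type) [MetricSpace X] [Fintype X]
    (T : SimpleGraph X) (hT : IsMST T) (σ : ℕ → ℝ)
    (hσ : (edgeLengths T).sort (· ≥ ·) =
      (List.range (Fintype.card X - 1)).map (fun i => σ (i + 1)))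
    (n : ℕ) (hn2 : 2 ≤ n) (hn : n ≤ Fintype.card X) :
    alphaN X n = σ (n - 1) := by
  have hk : n - 2 < ((edgeLengths T).sort (· ≥ ·)).length := by
    rw [hσ, List.length_map, List.length_range]
    omega
  have hσk : σ (n - 1) = ((edgeLengths T).sort (· ≥ ·))[n - 2] := by
    simp only [hσ, List.getElem_map, List.getElem_range]
    congr 1
    omega
  have hc (a : ℝ) :
      a ≤ σ (n - 1) ↔ n - 1 ≤ #{e ∈ T.edgeSet.toFinite.toFinset | a ≤ edgeLength e} := by
    rw [hσk, le_getElem_iff_lt_countP_of_pairwise_ge (Multiset.pairwise_sort _ _) hk,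
      ← Multiset.coe_countP, Multiset.sort_eq, countP_edgeLengths]
    omega
  have hub (f : X → Fin n) (hf : Surjective f) : partAlpha f ≤ σ (n - 1) :=
    (hc _).2 (hT.1.connected.sub_one_le_card_filter_partAlpha_le hf)
  obtain ⟨f, hf, hfσ⟩ := hT.exists_surjective_le_partAlpha hn2 ((hc _).1 le_rfl)
  refine IsGreatest.csSup_eq ⟨⟨f, hf, le_antisymm hfσ (hub f hf)⟩, ?_⟩
  rintro _ ⟨g, hg, rfl⟩
  exact hub g hg

/-- For a finite metric space `X` with `m ≥ 2` points, `2 ≤ n ≤ m`, and mst-spectrum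
`σ₁ ≥ … ≥ σ_{m−1}`, one has `αₙ(X) = σ_{n−1}`. -/
theorem alphaN_eq_mst_spectrum (X : Type) [MetricSpace X] [Fintype X] [Nonempty X]
    (hm : 2 ≤ Fintype.card X) (T : SimpleGraph X) (hT : IsMST T) (σ : ℕ → ℝ)
    (hσ : (edgeLengths T).sort (· ≥ ·) =
      (List.range (Fintype.card X - 1)).map (fun i => σ (i + 1)))
    (n : ℕ) (hn2 : 2 ≤ n) (hn : n ≤ Fintype.card X) :
    alphaN X n = σ (n - 1) :=
  alphaN_eq_mst_spectrum_general X T hT σ hσ n hn2 hn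
end

section
/- Let G = (V, E) be a finite simple graph and 0 < a < b ≤ 2a. Let V carry the metric where adjacent vertices are at distance b and all other distinct vertices are at distance a. If m is the largest positive integer such that 2·d_GH(aΔ_m, V) = b, then the chromatic number of G equals m + 1. -/
/-!
A proper `k`-coloring of `G` that uses every color is a surjection `V → aΔ_k` of distortion at
most `a`: vertices of one color are non-adjacent, hence at distance `≤ a`, and `b ≤ 2a`. So if
`G` is `k`-colorable then `2 d_GH(aΔ_k, V) ≤ a < b` (for `k > |V|` use any surjection
`aΔ_k → V` instead). Conversely, if `2 d_GH(aΔ_k, V) < b`, sending each vertex to a point of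
`aΔ_k` at distance `< b/2` in an optimal coupling is a proper coloring, since adjacent vertices
are `b` apart. As all distances in both spaces are at most `b`, always `2 d_GH(aΔ_k, V) ≤ b`.
Hence `2 d_GH(aΔ_k, V) = b` exactly when `G` is not `k`-colorable, and the largest such `k` is
`γ(G) - 1`.
-/

/-- `Δ` is a simplex of cardinality `n` and non-zero distance `l`. -/
def IsSimplexOf (Δ : Type) [MetricSpace Δ] [Fintype Δ] (n : ℕ) (l : ℝ) : Prop :=
  Fintype.card Δ = n ∧ ∀ x y : Δ, x ≠ y → dist x y = l

open GromovHausdorff Function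

/-- `Simplex n a` is `aΔ_n`: a type synonym, because `Fin n` already carries the metric `|i - j|`;
the second parameter only selects the metric instance below. -/
def Simplex (n : ℕ) (_ : ℝ) : Type := Fin n

namespace Simplex

variable {n : ℕ} {a : ℝ}

instance : Fintype (Simplex n a) := inferInstanceAs (Fintype (Fin n))

instance : DecidableEq (Simplex n a) := inferInstanceAs (DecidableEq (Fin n))

instance [NeZero n] : Nonempty (Simplex n a) := inferInstanceAs (Nonempty (Fin n))

theorem card : Fintype.card (Simplex n a) = n := Fintype.card_fin n

instance [Fact (0 < a)] : MetricSpace (Simplex n a) where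
  dist x y := if x = y then 0 else a
  dist_self _ := if_pos rfl
  dist_comm x y := by simp only [eq_comm]
  dist_triangle x y z := by
    have : 0 < a := Fact.out
    split_ifs <;> simp_all <;> linarith
  eq_of_dist_eq_zero {x y} h := by
    by_contra hxy
    exact (Fact.out : 0 < a).ne' ((if_neg hxy).symm.trans h)

variable [Fact (0 < a)]

theorem dist_eq (x y : Simplex n a) : dist x y = if x = y then 0 else a := rfl

theorem dist_le (x y : Simplex n a) : dist x y ≤ a := by
  rw [dist_eq]
  split_ifs
  exacts [(Fact.out : 0 < a).le, le_rfl]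

theorem isSimplexOf : IsSimplexOf (Simplex n a) n a :=
  ⟨card, fun _ _ h => if_neg h⟩

end Simplex

theorem Fintype.exists_surjective_of_card_le {α β : Type*} [Fintype α] [Fintype β] [Nonempty β]
    (h : Fintype.card β ≤ Fintype.card α) : ∃ f : α → β, Surjective f :=
  let ⟨e⟩ := Function.Embedding.nonempty_of_card_le h
  ⟨invFun e, invFun_surjective e.injective⟩

/-- A coloring using the most colors uses all of them: otherwise some color class has two vertices
(as there are at least as many vertices as colors), and moving one of them to an unused color uses
one color more. -/
theorem SimpleGraph.Colorable.exists_surjective_coloring {V α : Type*} [Fintype V] [Fintype α]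
    {G : SimpleGraph V} (hG : G.Colorable (Fintype.card α))
    (hα : Fintype.card α ≤ Fintype.card V) : ∃ C : G.Coloring α, Surjective C := by
  classical
  have : Nonempty (G.Coloring α) := ⟨hG.toColoring le_rfl⟩
  obtain ⟨C, hC⟩ := Finite.exists_max fun C : G.Coloring α => (Finset.univ.image C).card
  refine ⟨C, fun i => ?_⟩
  by_contra! hi
  obtain ⟨x, y, hxy, hCxy⟩ : ∃ x y, x ≠ y ∧ C x = C y := by
    by_contra! hinj
    have := Fintype.card_lt_of_injective_not_surjective C
      (fun x y h => not_imp_not.mp (hinj x y) h) fun h => (h i).elim hi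
    omega
  let C' : G.Coloring α := SimpleGraph.Coloring.mk (update C x i) fun {u v} huv => by
    by_cases hu : u = x <;> by_cases hv : v = x
    · subst hu hv
      exact (G.irrefl huv).elim
    · simpa [hu, hv] using (hi v).symm
    · simpa [hu, hv] using hi u
    · simpa [hu, hv] using C.valid huv
  have hC' : ⇑C' = update C x i := rfl
  have hsub : insert i (Finset.univ.image C) ⊆ Finset.univ.image C' := by
    intro j hj
    simp only [Finset.mem_insert, Finset.mem_image, Finset.mem_univ, true_and] at hj ⊢
    rcases hj with rfl | ⟨w, rfl⟩
    · exact ⟨x, by simp [hC']⟩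
    · by_cases hw : w = x
      · exact ⟨y, by simp [hC', hxy.symm, hw, hCxy]⟩
      · exact ⟨w, by simp [hC', hw]⟩
  have := Finset.card_le_card hsub
  rw [Finset.card_insert_of_notMem (by simpa using fun w => hi w)] at this
  linarith [hC C']

namespace GromovHausdorff

universe u

section

variable {X Y : Type*} [MetricSpace X] [Nonempty X] [MetricSpace Y] [Nonempty Y]

theorem ghDist_comm [CompactSpace X] [CompactSpace Y] : ghDist X Y = ghDist Y X :=
  dist_comm _ _

theorem two_ghDist_le_of_surjective [CompactSpace X] [CompactSpace Y] {f : X → Y}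
    (hf : Surjective f) {ε : ℝ} (H : ∀ x x', |dist x x' - dist (f x) (f x')| ≤ ε) :
    2 * ghDist X Y ≤ ε := by
  have := ghDist_le_of_approx_subsets (s := Set.univ) (fun x => f x) (ε₁ := 0) (ε₃ := 0)
    (fun x => ⟨x, Set.mem_univ x, by simp⟩)
    (fun y => (hf y).elim fun x hx => ⟨⟨x, Set.mem_univ x⟩, by simp [hx]⟩)
    (fun x x' => H x x')
  linarith

end

theorem two_ghDist_le_of_forall_dist_le {X Y : Type u} [MetricSpace X] [Nonempty X] [Fintype X]
    [MetricSpace Y] [Nonempty Y] [Fintype Y] {D : ℝ}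
    (hX : ∀ x x' : X, dist x x' ≤ D) (hY : ∀ y y' : Y, dist y y' ≤ D) :
    2 * ghDist X Y ≤ D := by
  wlog hcard : Fintype.card Y ≤ Fintype.card X generalizing X Y
  · rw [ghDist_comm]
    exact this hY hX (le_of_not_ge hcard)
  obtain ⟨f, hf⟩ := Fintype.exists_surjective_of_card_le hcard
  refine two_ghDist_le_of_surjective hf fun x x' => abs_sub_le_iff.mpr ⟨?_, ?_⟩
  · linarith [hX x x', dist_nonneg (x := f x) (y := f x')]
  · linarith [hY (f x) (f x'), dist_nonneg (x := x) (y := x')]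

variable {V : Type*} [MetricSpace V] [Nonempty V] {G : SimpleGraph V}

theorem two_ghDist_simplex_le_of_colorable [Fintype V] {a : ℝ} [Fact (0 < a)] {n : ℕ}
    [NeZero n] (hG : G.Colorable n) (hle : ∀ x y : V, dist x y ≤ 2 * a)
    (hnonadj : ∀ x y : V, ¬ G.Adj x y → dist x y ≤ a) :
    2 * ghDist (Simplex n a) V ≤ a := by
  have ha : 0 < a := Fact.out
  rcases le_or_gt n (Fintype.card V) with hn | hn
  · have hG' : G.Colorable (Fintype.card (Simplex n a)) := by rwa [Simplex.card]
    obtain ⟨C, hC⟩ := hG'.exists_surjective_coloring (by rwa [Simplex.card])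
    rw [ghDist_comm]
    refine two_ghDist_le_of_surjective hC fun x y => ?_
    rw [Simplex.dist_eq]
    split_ifs with hCxy
    · rw [sub_zero, abs_of_nonneg dist_nonneg]
      exact hnonadj x y fun hxy => C.valid hxy hCxy
    · exact abs_sub_le_iff.mpr
        ⟨by linarith [hle x y], by linarith [dist_nonneg (x := x) (y := y)]⟩
  · obtain ⟨f, hf⟩ := Fintype.exists_surjective_of_card_le (α := Simplex n a) (β := V)
      (by rw [Simplex.card]; exact hn.le)
    refine two_ghDist_le_of_surjective hf fun x y => ?_
    rw [Simplex.dist_eq]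
    split_ifs with hxy
    · simp [hxy, ha.le]
    · exact abs_sub_le_iff.mpr
        ⟨by linarith [dist_nonneg (x := f x) (y := f y)], by linarith [hle (f x) (f y)]⟩

theorem colorable_of_two_ghDist_lt [CompactSpace V] {b : ℝ}
    (hadj : ∀ x y : V, G.Adj x y → b ≤ dist x y) {Δ : Type*} [MetricSpace Δ] [Fintype Δ]
    [Nonempty Δ] (h : 2 * ghDist Δ V < b) : G.Colorable (Fintype.card Δ) := by
  set f := optimalGHInjl Δ V
  set g := optimalGHInjr Δ V
  have hf : Isometry f := isometry_optimalGHInjl Δ V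
  have hg : Isometry g := isometry_optimalGHInjr Δ V
  have hH : Metric.hausdorffDist (Set.range f) (Set.range g) < b / 2 := by
    rw [hausdorffDist_optimal]
    linarith
  have hfin := Metric.hausdorffEDist_ne_top_of_nonempty_of_bounded (Set.range_nonempty f)
    (Set.range_nonempty g) (isCompact_range hf.continuous).isBounded
    (isCompact_range hg.continuous).isBounded
  have hnear : ∀ v : V, ∃ δ : Δ, dist (f δ) (g v) < b / 2 := fun v => by
    obtain ⟨_, ⟨δ, rfl⟩, hδ⟩ :=
      Metric.exists_dist_lt_of_hausdorffDist_lt' (Set.mem_range_self v) hH hfin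
    exact ⟨δ, hδ⟩
  choose C hC using hnear
  refine (SimpleGraph.Coloring.mk C fun {x y} hxy hCxy => ?_).colorable
  have hx := hC x
  rw [hCxy] at hx
  have := dist_triangle_left (g x) (g y) (f (C y))
  rw [hg.dist_eq] at this
  linarith [hadj x y hxy, hC y]

end GromovHausdorff

/-- Let `G` be a finite simple graph on `V`, `0 < a < b ≤ 2a`, and let `V` carry the
metric in which adjacent vertices are at distance `b` and all other distinct vertices
are at distance `a`. If `m` is the largest positive integer with `2 d_GH(aΔ_m, V) = b`,
then the chromatic number of `G` equals `m + 1`. -/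
theorem chromaticNumber_eq_of_ghDist (V : Type) [MetricSpace V] [Fintype V] [Nonempty V]
    (G : SimpleGraph V) [DecidableRel G.Adj] (a b : ℝ) (ha : 0 < a) (hab : a < b) (hb2a : b ≤ 2 * a)
    (hdist : ∀ x y : V, x ≠ y → dist x y = if G.Adj x y then b else a)
    (m : ℕ) (hm : 0 < m)
    (hmeq : ∀ (Δ : Type) (_ : MetricSpace Δ) (_ : Fintype Δ) (_ : Nonempty Δ),
      IsSimplexOf Δ m a → 2 * GromovHausdorff.ghDist Δ V = b)
    (hmax : ∀ m' : ℕ, m < m' →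
      ∀ (Δ : Type) (_ : MetricSpace Δ) (_ : Fintype Δ) (_ : Nonempty Δ),
        IsSimplexOf Δ m' a → 2 * GromovHausdorff.ghDist Δ V ≠ b) :
    G.chromaticNumber = m + 1 := by
  have : Fact (0 < a) := ⟨ha⟩
  have : NeZero m := ⟨hm.ne'⟩
  have hadj : ∀ x y : V, G.Adj x y → dist x y = b := fun x y h => by
    rw [hdist x y h.ne, if_pos h]
  have hnonadj : ∀ x y : V, ¬ G.Adj x y → dist x y ≤ a := fun x y h => by
    rcases eq_or_ne x y with rfl | hxy
    · simpa using ha.le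
    · rw [hdist x y hxy, if_neg h]
  have hle : ∀ x y : V, dist x y ≤ b := fun x y => by
    by_cases h : G.Adj x y
    · exact (hadj x y h).le
    · linarith [hnonadj x y h]
  rw [SimpleGraph.chromaticNumber_eq_iff_colorable_not_colorable]
  constructor
  · by_contra hcol
    have hub : 2 * ghDist (Simplex (m + 1) a) V ≤ b :=
      two_ghDist_le_of_forall_dist_le (fun x y => (Simplex.dist_le x y).trans hab.le) hle
    have hlb : b ≤ 2 * ghDist (Simplex (m + 1) a) V := by
      by_contra! hlt
      have := colorable_of_two_ghDist_lt (fun x y h => (hadj x y h).ge) hlt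
      rw [Simplex.card] at this
      exact hcol this
    exact hmax (m + 1) m.lt_succ_self _ _ _ inferInstance Simplex.isSimplexOf (le_antisymm hub hlb)
  · intro hcol
    have := two_ghDist_simplex_le_of_colorable hcol (fun x y => (hle x y).trans hb2a) hnonadj
    linarith [hmeq (Simplex m a) _ _ inferInstance Simplex.isSimplexOf]
end
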